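/- Let X be a topological space and let (μ_n) be a sequence of Borel probability measures on X satisfying the large deviations principle with rate function J (lower semicontinuous, not assumed to have compact sublevel sets). Let φ : X → [−∞,∞] be Borel measurable, write φ_M = φ ∧ M for M ∈ ℝ, and assume that the superlevel set φ^{−1}([w,∞]) is closed for every w ∈ ℝ with w ≥ lim_{M→∞} sup_{x∈X} [φ_M(x) − J(x)]. Then for every b ∈ ℝ, limsup_{n→∞} (1/n) log ∫_X e^{n φ_b(x)} μ_n(dx) ≤ lim_{M→∞} sup_{x∈X} [φ_M(x) − J(x)]. -/

import Mathlib

/-!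
Let `β` be the limit of `sup (φ ∧ M - J)` and fix a real `c > β`. Then `φ ∧ M - J ≤ c` for
every `M`, and every superlevel set `{φ ≥ w}` with `w ≥ c` is closed. Slice the values of `φ ∧ b`
at the levels `c, c + δ, c + 2δ, …`. Raising the truncation level from `a` to `a + δ` adds at most
`e^{n(a + δ)} μₙ {φ ≥ a}` to the integral. On the closed set `{φ ≥ a}` we have `J ≥ a - c`, so
the LDP upper bound gives this term exponential growth at most `c + δ`. Exponential growth rates
of sums are maxima, so the integral grows at rate at most `c + δ`. Now let `δ → 0` and `c ↓ β`.
-/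

open MeasureTheory Filter Topology ENNReal
open ExpGrowth

lemma limsup_inv_mul_log_eq_expGrowthSup (u : ℕ → ℝ≥0∞) :
    limsup (fun n : ℕ => ((n : ℝ)⁻¹ : EReal) * ENNReal.log (u n)) atTop = expGrowthSup u := by
  simp only [expGrowthSup, div_eq_mul_inv, mul_comm (ENNReal.log _)]
  rfl

lemma Monotone.le_limsup_atTop {ι α : Type*} [SemilatticeSup ι] [Nonempty ι] [CompleteLattice α]
    {f : ι → α} (hf : Monotone f) (i : ι) : f i ≤ limsup f atTop :=
  le_limsup_of_frequently_le ((eventually_ge_atTop i).frequently.mono fun _ => (hf ·))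
    (by isBoundedDefault)

lemma neg_iInf_superlevel_le {X : Type*} {φ : X → EReal} (J : X → ℝ≥0∞) {a c : ℝ}
    (h : ∀ x, φ x ⊓ a - J x ≤ c) :
    -(⨅ x ∈ {x | (a : EReal) ≤ φ x}, (J x : EReal)) ≤ (c - a : ℝ) := by
  rw [EReal.neg_le]
  refine le_iInf₂ fun x (hx : (a : EReal) ≤ φ x) => ?_
  have hax := h x
  rw [min_eq_right hx, EReal.sub_le_iff_le_add (.inr (EReal.coe_ne_top c))
    (.inr (EReal.coe_ne_bot c))] at hax
  rw [← EReal.coe_neg, neg_sub, EReal.coe_sub,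
    EReal.sub_le_iff_le_add (.inl (EReal.coe_ne_bot c)) (.inl (EReal.coe_ne_top c)), add_comm]
  exact hax

section

variable {X : Type*} [MeasurableSpace X] {φ : X → EReal}

lemma lintegral_exp_mul_min_le_add (ν : Measure X) (hφ : Measurable φ) (n : ℕ) {a b : EReal}
    (hab : a ≤ b) :
    ∫⁻ x, EReal.exp (n * (φ x ⊓ b)) ∂ν ≤
      ∫⁻ x, EReal.exp (n * (φ x ⊓ a)) ∂ν + EReal.exp (b * n) * ν {x | a ≤ φ x} := by
  have hpt : ∀ x, EReal.exp (n * (φ x ⊓ b)) ≤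
      EReal.exp (n * (φ x ⊓ a)) + {x | a ≤ φ x}.indicator (fun _ => EReal.exp (b * n)) x := by
    intro x
    by_cases hx : x ∈ {x | a ≤ φ x}
    · rw [Set.indicator_of_mem hx, mul_comm b]
      exact le_add_left (EReal.exp_monotone (by gcongr; exact min_le_right _ _))
    · have hφa : φ x ≤ a := (not_le.1 hx).le
      rw [Set.indicator_of_notMem hx, add_zero, min_eq_left hφa, min_eq_left (hφa.trans hab)]
  calc ∫⁻ x, EReal.exp (n * (φ x ⊓ b)) ∂ν
      ≤ ∫⁻ x, (EReal.exp (n * (φ x ⊓ a)) +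
          {x | a ≤ φ x}.indicator (fun _ => EReal.exp (b * n)) x) ∂ν := lintegral_mono hpt
    _ = ∫⁻ x, EReal.exp (n * (φ x ⊓ a)) ∂ν +
          ∫⁻ x, {x | a ≤ φ x}.indicator (fun _ => EReal.exp (b * n)) x ∂ν :=
        lintegral_add_left (by fun_prop) _
    _ ≤ _ := by gcongr; exact lintegral_indicator_const_le _ _

variable (μ : ℕ → Measure X)

lemma expGrowthSup_lintegral_exp_mul_min_le [∀ n, IsProbabilityMeasure (μ n)] (b : EReal) :
    expGrowthSup (fun n => ∫⁻ x, EReal.exp (n * (φ x ⊓ b)) ∂μ n) ≤ b := by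
  refine Eventually.expGrowthSup_le (Eventually.of_forall fun n => ?_)
  calc ∫⁻ x, EReal.exp (n * (φ x ⊓ b)) ∂μ n ≤ ∫⁻ _, EReal.exp (b * n) ∂μ n :=
        lintegral_mono fun x =>
          EReal.exp_monotone (by rw [mul_comm b]; gcongr; exact min_le_right _ _)
    _ = EReal.exp (b * n) := by simp

lemma expGrowthSup_lintegral_exp_mul_min_le_sup [TopologicalSpace X] (J : X → ℝ≥0∞)
    (hub : ∀ F : Set X, IsClosed F → expGrowthSup (fun n => μ n F) ≤ -(⨅ x ∈ F, (J x : EReal)))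
    (hφ : Measurable φ) {a b c : ℝ} (hab : a ≤ b) (hc : ∀ x, φ x ⊓ a - J x ≤ c)
    (hF : IsClosed {x | (a : EReal) ≤ φ x}) :
    expGrowthSup (fun n => ∫⁻ x, EReal.exp (n * (φ x ⊓ b)) ∂μ n) ≤
      expGrowthSup (fun n => ∫⁻ x, EReal.exp (n * (φ x ⊓ a)) ∂μ n) ⊔ (b - a + c : ℝ) := by
  set F := {x | (a : EReal) ≤ φ x}
  have hexp : expGrowthSup (fun n : ℕ => EReal.exp (b * n)) = b := expGrowthSup_exp
  calc expGrowthSup (fun n => ∫⁻ x, EReal.exp (n * (φ x ⊓ b)) ∂μ n)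
      ≤ expGrowthSup ((fun n => ∫⁻ x, EReal.exp (n * (φ x ⊓ a)) ∂μ n) +
          (fun n : ℕ => EReal.exp (b * n)) * fun n => μ n F) :=
        expGrowthSup_monotone fun n =>
          lintegral_exp_mul_min_le_add (μ n) hφ n (EReal.coe_le_coe_iff.2 hab)
    _ = expGrowthSup (fun n => ∫⁻ x, EReal.exp (n * (φ x ⊓ a)) ∂μ n) ⊔
          expGrowthSup ((fun n : ℕ => EReal.exp (b * n)) * fun n => μ n F) := expGrowthSup_add
    _ ≤ expGrowthSup (fun n => ∫⁻ x, EReal.exp (n * (φ x ⊓ a)) ∂μ n) ⊔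
          ((b : EReal) + expGrowthSup fun n => μ n F) := by
        gcongr
        refine (expGrowthSup_mul_le (.inl ?_) (.inl ?_)).trans_eq (by rw [hexp]) <;> simp [hexp]
    _ ≤ _ := by
        gcongr
        calc (b : EReal) + expGrowthSup (fun n => μ n F) ≤ b + (c - a : ℝ) := by
              gcongr; exact (hub F hF).trans (neg_iInf_superlevel_le J hc)
          _ = (b - a + c : ℝ) := by norm_cast; ring

lemma expGrowthSup_lintegral_exp_mul_min_grid_le [TopologicalSpace X]
    [∀ n, IsProbabilityMeasure (μ n)] (J : X → ℝ≥0∞)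
    (hub : ∀ F : Set X, IsClosed F → expGrowthSup (fun n => μ n F) ≤ -(⨅ x ∈ F, (J x : EReal)))
    (hφ : Measurable φ) {c δ : ℝ} (hδ : 0 ≤ δ) (hc : ∀ M : ℝ, ∀ x, φ x ⊓ M - J x ≤ c)
    (hcl : ∀ w : ℝ, c ≤ w → IsClosed {x | (w : EReal) ≤ φ x}) (k : ℕ) :
    expGrowthSup (fun n => ∫⁻ x, EReal.exp (n * (φ x ⊓ (c + k * δ : ℝ))) ∂μ n) ≤ (c + δ : ℝ) := by
  induction k with
  | zero =>
    simpa using (expGrowthSup_lintegral_exp_mul_min_le μ (c : EReal)).trans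
      (EReal.coe_le_coe_iff.2 (le_add_of_nonneg_right hδ))
  | succ k ih =>
    have hk : c ≤ c + k * δ := le_add_of_nonneg_right (by positivity)
    refine (expGrowthSup_lintegral_exp_mul_min_le_sup μ J hub hφ (by push_cast; linarith) (hc _)
      (hcl _ hk)).trans (sup_le ih (EReal.coe_le_coe_iff.2 (by push_cast; linarith)))

lemma expGrowthSup_lintegral_exp_mul_min_le_of_closed_superlevels [TopologicalSpace X]
    [∀ n, IsProbabilityMeasure (μ n)] (J : X → ℝ≥0∞)
    (hub : ∀ F : Set X, IsClosed F → expGrowthSup (fun n => μ n F) ≤ -(⨅ x ∈ F, (J x : EReal)))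
    (hφ : Measurable φ) {c : ℝ} (hc : ∀ M : ℝ, ∀ x, φ x ⊓ M - J x ≤ c)
    (hcl : ∀ w : ℝ, c ≤ w → IsClosed {x | (w : EReal) ≤ φ x}) (b : ℝ) :
    expGrowthSup (fun n => ∫⁻ x, EReal.exp (n * (φ x ⊓ b)) ∂μ n) ≤ c := by
  refine EReal.le_of_forall_lt_iff_le.1 fun z hcz => ?_
  have hδ : 0 < z - c := sub_pos.2 (EReal.coe_lt_coe_iff.1 hcz)
  obtain ⟨k, hk⟩ := exists_nat_ge ((b - c) / (z - c))
  have hbk : b ≤ c + k * (z - c) := by rw [div_le_iff₀ hδ] at hk; linarith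
  calc expGrowthSup (fun n => ∫⁻ x, EReal.exp (n * (φ x ⊓ b)) ∂μ n)
      ≤ expGrowthSup (fun n => ∫⁻ x, EReal.exp (n * (φ x ⊓ (c + k * (z - c) : ℝ))) ∂μ n) :=
        expGrowthSup_monotone fun n => lintegral_mono fun x =>
          EReal.exp_monotone (by gcongr)
    _ ≤ (c + (z - c) : ℝ) :=
        expGrowthSup_lintegral_exp_mul_min_grid_le μ J hub hφ hδ.le hc hcl k
    _ = z := by rw [add_sub_cancel]

end

theorem varadhan_truncated_upper_of_closed_superlevels_general
    {X : Type*} [TopologicalSpace X] [MeasurableSpace X]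
    (μ : ℕ → Measure X) [∀ n, IsProbabilityMeasure (μ n)]
    (J : X → ℝ≥0∞)
    (hub : ∀ F : Set X, IsClosed F →
      Filter.limsup (fun n : ℕ => ((n : ℝ)⁻¹ : EReal) * ENNReal.log (μ n F)) Filter.atTop
        ≤ -(⨅ x ∈ F, (J x : EReal)))
    (φ : X → EReal) (hφ : Measurable φ)
    (hlevel : ∀ w : ℝ,
      Filter.limsup (fun M : ℝ => ⨆ x, (φ x ⊓ (M : EReal)) - (J x : EReal)) Filter.atTop
        ≤ (w : EReal) → IsClosed {x | (w : EReal) ≤ φ x})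
    (b : ℝ) :
    Filter.limsup (fun n : ℕ => ((n : ℝ)⁻¹ : EReal) *
        ENNReal.log (∫⁻ x, EReal.exp ((n : EReal) * (φ x ⊓ (b : EReal))) ∂ μ n)) Filter.atTop
      ≤ Filter.limsup (fun M : ℝ => ⨆ x, (φ x ⊓ (M : EReal)) - (J x : EReal)) Filter.atTop := by
  set β := limsup (fun M : ℝ => ⨆ x, (φ x ⊓ (M : EReal)) - (J x : EReal)) atTop
  have hmono : Monotone fun M : ℝ => ⨆ x, (φ x ⊓ (M : EReal)) - (J x : EReal) := fun _ _ h =>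
    iSup_mono fun x => EReal.sub_le_sub (inf_le_inf_left _ (EReal.coe_le_coe_iff.2 h)) le_rfl
  have hβ : ∀ M : ℝ, ∀ x, φ x ⊓ M - J x ≤ β := fun M x =>
    (le_iSup (fun x => φ x ⊓ (M : EReal) - (J x : EReal)) x).trans (hmono.le_limsup_atTop M)
  rw [limsup_inv_mul_log_eq_expGrowthSup]
  refine EReal.le_of_forall_lt_iff_le.1 fun c hβc => ?_
  exact expGrowthSup_lintegral_exp_mul_min_le_of_closed_superlevels μ J
    (fun F hF => limsup_inv_mul_log_eq_expGrowthSup (μ · F) ▸ hub F hF) hφ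
    (fun M x => (hβ M x).trans hβc.le)
    (fun w hw => hlevel w (hβc.le.trans (EReal.coe_le_coe_iff.2 hw))) b

/-- Key step of the main lemma under condition 2 (closed superlevel sets above the
limiting value): for every real truncation level `b`, the upper bound holds for the
truncated integrand `φ ∧ b`. -/
theorem varadhan_truncated_upper_of_closed_superlevels
    {X : Type*} [TopologicalSpace X] [MeasurableSpace X] [BorelSpace X]
    (μ : ℕ → Measure X) [∀ n, IsProbabilityMeasure (μ n)]
    (J : X → ℝ≥0∞) (hJ : LowerSemicontinuous J)
    (hub : ∀ F : Set X, IsClosed F →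
      Filter.limsup (fun n : ℕ => ((n : ℝ)⁻¹ : EReal) * ENNReal.log (μ n F)) Filter.atTop
        ≤ -(⨅ x ∈ F, (J x : EReal)))
    (hlb : ∀ G : Set X, IsOpen G →
      -(⨅ x ∈ G, (J x : EReal)) ≤
        Filter.liminf (fun n : ℕ => ((n : ℝ)⁻¹ : EReal) * ENNReal.log (μ n G)) Filter.atTop)
    (φ : X → EReal) (hφ : Measurable φ)
    (hlevel : ∀ w : ℝ,
      Filter.limsup (fun M : ℝ => ⨆ x, (φ x ⊓ (M : EReal)) - (J x : EReal)) Filter.atTop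
        ≤ (w : EReal) → IsClosed {x | (w : EReal) ≤ φ x})
    (b : ℝ) :
    Filter.limsup (fun n : ℕ => ((n : ℝ)⁻¹ : EReal) *
        ENNReal.log (∫⁻ x, EReal.exp ((n : EReal) * (φ x ⊓ (b : EReal))) ∂ μ n)) Filter.atTop
      ≤ Filter.limsup (fun M : ℝ => ⨆ x, (φ x ⊓ (M : EReal)) - (J x : EReal)) Filter.atTop :=
  varadhan_truncated_upper_of_closed_superlevels_general μ J hub φ hφ hlevel b
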